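/- If X has type 2 and Y is an L_2-space, then every Cohen strongly 2-summing operator u : X → Y is absolutely 1-summing; that is, D_2(X,Y) ⊆ Π_1(X,Y). -/

import Mathlib

/-!
Let `(xᵢ)_{i<m}` be weakly `1`-summable. Put the `u xᵢ` into a finite-dimensional `S ⊆ Y` with
`v : S ≃ ℓ₂ⁿ`, `‖v‖‖v⁻¹‖ ≤ λ`; by a compactness argument `S` is also `λ`-complemented in `Y`,
with projection `P`. Put `T = v ∘ P` and, for the `2ⁿ` sign vectors `ε`, `ψ_ε = ⟪ε, T ·⟫ ∈ Y*`.
Khintchine's inequality `2ⁿ ‖w‖ ≤ √3 ∑_ε |⟪ε, w⟫|` gives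
`2ⁿ ∑ᵢ ‖u xᵢ‖ ≤ √3 ‖v⁻¹‖ ∑_ε ‖ψ_ε ∘ u‖ ‖(xᵢ)‖_{w,1}`.
Since `w ↦ ∑_ε ⟪ε, w⟫ eε` is `2^{n/2}` times an isometry, `‖(ψ_ε)‖_{w,2} ≤ 2^{n/2} ‖T‖`, and
testing the strongly `2`-summing inequality against unit vectors nearly norming the `ψ_ε ∘ u`
gives `∑_ε ‖ψ_ε ∘ u‖ ≤ 2ⁿ C ‖T‖`. Hence `∑ᵢ ‖u xᵢ‖ ≤ √3 C λ² ‖(xᵢ)‖_{w,1}`.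
-/

open MeasureTheory Finset Filter
open scoped ENNReal NNReal

noncomputable section

universe u v

/-- The `i`-th Rademacher function. -/
def rademacher (i : ℕ) (t : ℝ) : ℝ :=
  if Int.fract ((2 : ℝ) ^ i * t) < 1 / 2 then 1 else -1

/-- The Rademacher (`Rad`) norm of the first `m` terms of a sequence:
`(∫_0^1 ‖∑_{i<m} r_i(t) x_i‖² dt)^{1/2}`. -/
def radNorm {Z : Type u} [NormedAddCommGroup Z] [NormedSpace ℝ Z] (m : ℕ) (x : ℕ → Z) : ℝ :=
  (∫ t in (0:ℝ)..1, ‖∑ i ∈ Finset.range m, rademacher i t • x i‖ ^ 2) ^ ((1:ℝ) / 2)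

/-- Conjugate exponent in `ℝ≥0∞` (`conjExp p = p*`, `1/p + 1/p* = 1`). -/
def conjExp (p : ℝ≥0∞) : ℝ≥0∞ := (1 - p⁻¹)⁻¹

/-- Finite strong `ℓ_q` norm `‖(x_i)_{i<m}‖_q` (sup norm if `q = ∞`). -/
def lpNormFin {Z : Type u} [NormedAddCommGroup Z] (q : ℝ≥0∞) (m : ℕ) (x : ℕ → Z) : ℝ :=
  if q = ∞ then ⨆ i : Fin m, ‖x (i : ℕ)‖
  else (∑ i ∈ Finset.range m, ‖x i‖ ^ q.toReal) ^ (1 / q.toReal)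

/-- Finite weak `ℓ_q` norm `‖(x_i)_{i<m}‖_{w,q}`. -/
def weakNorm {Z : Type u} [NormedAddCommGroup Z] [NormedSpace ℝ Z] (q : ℝ≥0∞) (m : ℕ)
    (x : ℕ → Z) : ℝ :=
  if q = ∞ then ⨆ i : Fin m, ‖x (i : ℕ)‖
  else ⨆ φ : {φ : Z →L[ℝ] ℝ // ‖φ‖ ≤ 1},
    (∑ i ∈ Finset.range m, |φ.1 (x i)| ^ q.toReal) ^ (1 / q.toReal)

/-- Membership in `Rad(Z)`: almost unconditionally summable sequences. -/
def MemRad {Z : Type u} [NormedAddCommGroup Z] [NormedSpace ℝ Z] (x : ℕ → Z) : Prop :=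
  ∃ C, ∀ m, radNorm m x ≤ C

/-- Weakly `q`-summable sequences `ℓ_q^w(Z)`. -/
def MemWeakLp {Z : Type u} [NormedAddCommGroup Z] [NormedSpace ℝ Z] (q : ℝ≥0∞)
    (x : ℕ → Z) : Prop :=
  ∃ C, ∀ m, weakNorm q m x ≤ C

/-- Absolutely `p`-summable sequences `ℓ_p(Z)` (bounded sequences if `p = ∞`). -/
def MemStrongLp {Z : Type u} [NormedAddCommGroup Z] (p : ℝ≥0∞) (x : ℕ → Z) : Prop :=
  if p = ∞ then ∃ C, ∀ i, ‖x i‖ ≤ C else Summable fun i => ‖x i‖ ^ p.toReal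

/-- Cohen strongly `p`-summable sequences `ℓ_p⟨Z⟩`. -/
def MemCohen {Z : Type u} [NormedAddCommGroup Z] [NormedSpace ℝ Z] (p : ℝ≥0∞)
    (y : ℕ → Z) : Prop :=
  ∀ φ : ℕ → (Z →L[ℝ] ℝ), MemWeakLp (conjExp p) φ → Summable fun i => |φ i (y i)|

/-- Almost `p`-summing operators. -/
def IsAlmostPSumming {Z : Type u} {W : Type v} [NormedAddCommGroup Z] [NormedSpace ℝ Z]
    [NormedAddCommGroup W] [NormedSpace ℝ W] (p : ℝ≥0∞) (u : Z →L[ℝ] W) : Prop :=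
  ∃ C, 0 ≤ C ∧ ∀ m (x : ℕ → Z), radNorm m (fun i => u (x i)) ≤ C * weakNorm p m x

/-- The almost `p`-summing norm `π_{al.s.p}(u)`. -/
def almostNorm {Z : Type u} {W : Type v} [NormedAddCommGroup Z] [NormedSpace ℝ Z]
    [NormedAddCommGroup W] [NormedSpace ℝ W] (p : ℝ≥0∞) (u : Z →L[ℝ] W) : ℝ :=
  sInf {C | 0 ≤ C ∧ ∀ m (x : ℕ → Z), radNorm m (fun i => u (x i)) ≤ C * weakNorm p m x}

/-- Absolutely `p`-summing operators (every operator is `∞`-summing by convention). -/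
def IsPSumming {Z : Type u} {W : Type v} [NormedAddCommGroup Z] [NormedSpace ℝ Z]
    [NormedAddCommGroup W] [NormedSpace ℝ W] (p : ℝ≥0∞) (u : Z →L[ℝ] W) : Prop :=
  if p = ∞ then True
  else ∀ x : ℕ → Z, MemWeakLp p x → Summable fun i => ‖u (x i)‖ ^ p.toReal

/-- Cohen strongly `q`-summing with constant `C`. -/
def IsCohenStrongWith {Z : Type u} {W : Type v} [NormedAddCommGroup Z] [NormedSpace ℝ Z]
    [NormedAddCommGroup W] [NormedSpace ℝ W] (q : ℝ≥0∞) (C : ℝ) (u : Z →L[ℝ] W) : Prop :=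
  ∀ m (x : ℕ → Z) (φ : ℕ → (W →L[ℝ] ℝ)),
    ∑ i ∈ Finset.range m, |φ i (u (x i))| ≤ C * lpNormFin q m x * weakNorm (conjExp q) m φ

/-- Cohen strongly `q`-summing operators. -/
def IsCohenStrong {Z : Type u} {W : Type v} [NormedAddCommGroup Z] [NormedSpace ℝ Z]
    [NormedAddCommGroup W] [NormedSpace ℝ W] (q : ℝ≥0∞) (u : Z →L[ℝ] W) : Prop :=
  ∃ C, 0 ≤ C ∧ IsCohenStrongWith q C u

/-- The Banach space adjoint `u* : W* → Z*`. -/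
def adj {Z : Type u} {W : Type v} [NormedAddCommGroup Z] [NormedSpace ℝ Z]
    [NormedAddCommGroup W] [NormedSpace ℝ W] (u : Z →L[ℝ] W) :
    (W →L[ℝ] ℝ) →L[ℝ] (Z →L[ℝ] ℝ) :=
  (ContinuousLinearMap.compSL Z W ℝ (RingHom.id ℝ) (RingHom.id ℝ)).flip u

/-- `Z` has type `p` with constant `C`. -/
def HasTypeWith (p : ℝ≥0∞) (C : ℝ) (Z : Type u) [NormedAddCommGroup Z] [NormedSpace ℝ Z] :
    Prop :=
  ∀ m (x : ℕ → Z), radNorm m x ≤ C * lpNormFin p m x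

/-- `Z` has type `p`. -/
def HasTypeP (p : ℝ≥0∞) (Z : Type u) [NormedAddCommGroup Z] [NormedSpace ℝ Z] : Prop :=
  ∃ C, 0 ≤ C ∧ HasTypeWith p C Z

/-- The type-`p` constant `T_p(Z)`. -/
def typeConst (p : ℝ≥0∞) (Z : Type u) [NormedAddCommGroup Z] [NormedSpace ℝ Z] : ℝ :=
  sInf {C | 0 ≤ C ∧ HasTypeWith p C Z}

/-- `Z` is an `L_p`-space with constant `lam`. -/
def IsLpSpaceWith (p : ℝ≥0∞) [Fact (1 ≤ p)] (lam : ℝ) (Z : Type u) [NormedAddCommGroup Z]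
    [NormedSpace ℝ Z] : Prop :=
  ∀ E : Submodule ℝ Z, FiniteDimensional ℝ E →
    ∃ F : Submodule ℝ Z, E ≤ F ∧ FiniteDimensional ℝ F ∧
      ∃ v : F ≃L[ℝ] PiLp p (fun _ : Fin (Module.finrank ℝ F) => ℝ),
        ‖(v : F →L[ℝ] PiLp p (fun _ : Fin (Module.finrank ℝ F) => ℝ))‖ *
          ‖(v.symm : PiLp p (fun _ : Fin (Module.finrank ℝ F) => ℝ) →L[ℝ] F)‖ ≤ lam

/-- `Z` is an `L_p`-space. -/
def IsLpSpace (p : ℝ≥0∞) [Fact (1 ≤ p)] (Z : Type u) [NormedAddCommGroup Z]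
    [NormedSpace ℝ Z] : Prop :=
  ∃ lam : ℝ, 1 < lam ∧ IsLpSpaceWith p lam Z

/-- `Z` is isomorphic to a Hilbert space. -/
def IsomorphicToHilbert (Z : Type u) [NormedAddCommGroup Z] [NormedSpace ℝ Z] : Prop :=
  ∃ ι : Type u, Nonempty (Z ≃L[ℝ] lp (fun _ : ι => ℝ) 2)

/-- `Z` is isomorphic to a closed subspace of some `L_r(μ)`. -/
def IsomorphicToClosedSubspaceLp (r : ℝ≥0∞) [Fact (1 ≤ r)] (Z : Type u)
    [NormedAddCommGroup Z] [NormedSpace ℝ Z] : Prop :=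
  ∃ (Ω : Type) (mΩ : MeasurableSpace Ω) (μ : @MeasureTheory.Measure Ω mΩ)
    (S : Submodule ℝ (@MeasureTheory.Lp Ω ℝ mΩ _ r μ)),
    IsClosed (S : Set (@MeasureTheory.Lp Ω ℝ mΩ _ r μ)) ∧ Nonempty (Z ≃L[ℝ] S)

def boolSign (b : Bool) : ℝ := if b then 1 else -1

@[simp] lemma boolSign_mul_self (b : Bool) : boolSign b * boolSign b = 1 := by
  cases b <;> norm_num [boolSign]

@[simp] lemma boolSign_not (b : Bool) : boolSign (!b) = -boolSign b := by
  cases b <;> simp [boolSign]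

section Signs

variable {n : ℕ}

lemma sum_boolSign_mul_eq_zero (k : Fin n) (h : (Fin n → Bool) → ℝ)
    (hh : ∀ ε, h (Function.update ε k (!ε k)) = h ε) :
    ∑ ε : Fin n → Bool, boolSign (ε k) * h ε = 0 := by
  have hflip : Function.Involutive fun ε : Fin n → Bool => Function.update ε k (!ε k) :=
    fun ε => by ext j; by_cases hj : j = k <;> simp [hj]
  have := Equiv.sum_comp (hflip.toPerm _) fun ε => boolSign (ε k) * h ε
  simp only [Function.Involutive.coe_toPerm, Function.update_self, boolSign_not, hh, neg_mul,
    sum_neg_distrib] at this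
  linarith

lemma sum_boolSign_update_of_notMem {k₀ : Fin n} {s : Finset (Fin n)} (hk₀ : k₀ ∉ s)
    (c : Fin n → ℝ) (ε : Fin n → Bool) (b : Bool) :
    ∑ k ∈ s, boolSign (Function.update ε k₀ b k) * c k = ∑ k ∈ s, boolSign (ε k) * c k :=
  sum_congr rfl fun k hk => by rw [Function.update_of_ne (ne_of_mem_of_not_mem hk hk₀)]

lemma card_fun_fin_bool : Fintype.card (Fin n → Bool) = 2 ^ n := by simp

lemma sum_sum_boolSign_mul_sq (c : Fin n → ℝ) (s : Finset (Fin n)) :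
    ∑ ε : Fin n → Bool, (∑ k ∈ s, boolSign (ε k) * c k) ^ 2 = 2 ^ n * ∑ k ∈ s, c k ^ 2 := by
  classical
  induction s using Finset.induction_on with
  | empty => simp
  | @insert k₀ s hk₀ ih =>
    have hcross : ∑ ε : Fin n → Bool, boolSign (ε k₀) * (∑ k ∈ s, boolSign (ε k) * c k) = 0 :=
      sum_boolSign_mul_eq_zero k₀ _ fun ε => sum_boolSign_update_of_notMem hk₀ c ε _
    have hexp : ∀ ε : Fin n → Bool, (∑ k ∈ insert k₀ s, boolSign (ε k) * c k) ^ 2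
        = c k₀ ^ 2 + 2 * c k₀ * (boolSign (ε k₀) * ∑ k ∈ s, boolSign (ε k) * c k)
          + (∑ k ∈ s, boolSign (ε k) * c k) ^ 2 := fun ε => by
      rw [sum_insert hk₀]
      linear_combination c k₀ ^ 2 * boolSign_mul_self (ε k₀)
    rw [sum_congr rfl fun ε _ => hexp ε]
    simp only [sum_add_distrib, ← mul_sum, hcross, ih, sum_const, card_univ,
      card_fun_fin_bool, sum_insert hk₀, nsmul_eq_mul]
    push_cast
    ring

lemma sum_sum_boolSign_mul_pow_four_le (c : Fin n → ℝ) (s : Finset (Fin n)) :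
    ∑ ε : Fin n → Bool, (∑ k ∈ s, boolSign (ε k) * c k) ^ 4
      ≤ 3 * 2 ^ n * (∑ k ∈ s, c k ^ 2) ^ 2 := by
  classical
  induction s using Finset.induction_on with
  | empty => simp
  | @insert k₀ s hk₀ ih =>
    have hcross : ∀ j : ℕ,
        ∑ ε : Fin n → Bool, boolSign (ε k₀) * (∑ k ∈ s, boolSign (ε k) * c k) ^ j = 0 :=
      fun j => sum_boolSign_mul_eq_zero k₀ (fun ε => (∑ k ∈ s, boolSign (ε k) * c k) ^ j)
        fun ε => by simp only [sum_boolSign_update_of_notMem hk₀]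
    -- The odd powers of `boolSign (ε k₀)` cancel in the sum; `^ 1` lets `hcross 1` match.
    have hexp : ∀ ε : Fin n → Bool, (∑ k ∈ insert k₀ s, boolSign (ε k) * c k) ^ 4
        = c k₀ ^ 4 + 4 * c k₀ ^ 3 * (boolSign (ε k₀) * (∑ k ∈ s, boolSign (ε k) * c k) ^ 1)
          + 6 * c k₀ ^ 2 * (∑ k ∈ s, boolSign (ε k) * c k) ^ 2
          + 4 * c k₀ * (boolSign (ε k₀) * (∑ k ∈ s, boolSign (ε k) * c k) ^ 3)
          + (∑ k ∈ s, boolSign (ε k) * c k) ^ 4 := fun ε => by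
      rw [sum_insert hk₀]
      have h := boolSign_mul_self (ε k₀)
      set Z := ∑ k ∈ s, boolSign (ε k) * c k
      linear_combination (c k₀ ^ 4 * (boolSign (ε k₀) ^ 2 + 1) + 4 * c k₀ ^ 3 * Z * boolSign (ε k₀)
        + 6 * c k₀ ^ 2 * Z ^ 2) * h
    rw [sum_congr rfl fun ε _ => hexp ε]
    simp only [sum_add_distrib, ← mul_sum, hcross, sum_sum_boolSign_mul_sq,
      sum_const, card_univ, card_fun_fin_bool, sum_insert hk₀, nsmul_eq_mul]
    have hs : 0 ≤ ∑ k ∈ s, c k ^ 2 := sum_nonneg fun k _ => sq_nonneg _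
    push_cast
    nlinarith [pow_pos (two_pos (α := ℝ)) n, sq_nonneg (c k₀ ^ 2)]

end Signs

-- Cauchy–Schwarz twice: `(∑ f²)² ≤ ∑ |f| · ∑ |f|³` and `(∑ |f|³)² ≤ ∑ f² · ∑ f⁴`.
lemma sum_sq_pow_three_le {ι : Type*} (s : Finset ι) (f : ι → ℝ) :
    (∑ i ∈ s, f i ^ 2) ^ 3 ≤ (∑ i ∈ s, |f i|) ^ 2 * ∑ i ∈ s, f i ^ 4 := by
  have h₁ : (∑ i ∈ s, f i ^ 2) ^ 2 ≤ (∑ i ∈ s, |f i|) * ∑ i ∈ s, |f i| ^ 3 :=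
    sum_sq_le_sum_mul_sum_of_sq_le_mul s (fun i _ => abs_nonneg _)
      (fun i _ => pow_nonneg (abs_nonneg _) 3) fun i _ => le_of_eq <| by rw [← sq_abs (f i)]; ring
  have h₂ : (∑ i ∈ s, |f i| ^ 3) ^ 2 ≤ (∑ i ∈ s, f i ^ 2) * ∑ i ∈ s, f i ^ 4 :=
    sum_sq_le_sum_mul_sum_of_sq_le_mul s (fun i _ => sq_nonneg _)
      (fun i _ => by positivity) fun i _ => le_of_eq <| by
        rw [show f i ^ 4 = (f i ^ 2) ^ 2 by ring, ← sq_abs (f i)]; ring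
  set S₂ := ∑ i ∈ s, f i ^ 2
  have hS₂ : 0 ≤ S₂ := sum_nonneg fun i _ => sq_nonneg _
  have h₄ : S₂ * S₂ ^ 3 ≤ S₂ * ((∑ i ∈ s, |f i|) ^ 2 * ∑ i ∈ s, f i ^ 4) := by
    calc S₂ * S₂ ^ 3 = (S₂ ^ 2) ^ 2 := by ring
      _ ≤ ((∑ i ∈ s, |f i|) * ∑ i ∈ s, |f i| ^ 3) ^ 2 := pow_le_pow_left₀ (by positivity) h₁ 2
      _ = (∑ i ∈ s, |f i|) ^ 2 * (∑ i ∈ s, |f i| ^ 3) ^ 2 := by ring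
      _ ≤ (∑ i ∈ s, |f i|) ^ 2 * (S₂ * ∑ i ∈ s, f i ^ 4) := by gcongr
      _ = S₂ * ((∑ i ∈ s, |f i|) ^ 2 * ∑ i ∈ s, f i ^ 4) := by ring
  rcases hS₂.eq_or_lt with h0 | hpos
  · rw [← h0, zero_pow three_ne_zero]; positivity
  · exact le_of_mul_le_mul_left h₄ hpos

section SignVector

variable {n : ℕ}

open RealInnerProductSpace

def signVector (ε : Fin n → Bool) : EuclideanSpace ℝ (Fin n) :=
  WithLp.toLp 2 fun k => boolSign (ε k)

lemma inner_signVector (ε : Fin n → Bool) (w : EuclideanSpace ℝ (Fin n)) :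
    ⟪signVector ε, w⟫ = ∑ k, boolSign (ε k) * w k := by
  simp [signVector, PiLp.inner_apply, mul_comm]

lemma sum_inner_signVector_sq (w : EuclideanSpace ℝ (Fin n)) :
    ∑ ε : Fin n → Bool, ⟪signVector ε, w⟫ ^ 2 = 2 ^ n * ‖w‖ ^ 2 := by
  simp only [inner_signVector, sum_sum_boolSign_mul_sq, EuclideanSpace.real_norm_sq_eq]

lemma sum_inner_signVector_pow_four_le (w : EuclideanSpace ℝ (Fin n)) :
    ∑ ε : Fin n → Bool, ⟪signVector ε, w⟫ ^ 4 ≤ 3 * 2 ^ n * (‖w‖ ^ 2) ^ 2 := by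
  simpa only [inner_signVector, EuclideanSpace.real_norm_sq_eq]
    using sum_sum_boolSign_mul_pow_four_le (fun k => w k) univ

/-- **Khintchine's inequality** for `p = 1`, with the constant `√3`. -/
lemma pow_mul_norm_le_sum_abs_inner_signVector (w : EuclideanSpace ℝ (Fin n)) :
    2 ^ n * ‖w‖ ≤ √3 * ∑ ε : Fin n → Bool, |⟪signVector ε, w⟫| := by
  set A := ∑ ε : Fin n → Bool, |⟪signVector ε, w⟫|
  have hmoments := sum_sq_pow_three_le univ fun ε : Fin n → Bool => ⟪signVector ε, w⟫
  rw [sum_inner_signVector_sq] at hmoments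
  have h : (2 ^ n * ‖w‖ ^ 4) * (2 ^ n * ‖w‖) ^ 2 ≤ (2 ^ n * ‖w‖ ^ 4) * (√3 * A) ^ 2 := by
    calc (2 ^ n * ‖w‖ ^ 4) * (2 ^ n * ‖w‖) ^ 2 = (2 ^ n * ‖w‖ ^ 2) ^ 3 := by ring
      _ ≤ A ^ 2 * (3 * 2 ^ n * (‖w‖ ^ 2) ^ 2) :=
        hmoments.trans (by gcongr; exact sum_inner_signVector_pow_four_le w)
      _ = (2 ^ n * ‖w‖ ^ 4) * (√3 * A) ^ 2 := by rw [mul_pow, Real.sq_sqrt zero_le_three]; ring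
  rcases (norm_nonneg w).eq_or_lt with hw | hw
  · rw [← hw, mul_zero]; positivity
  · exact (pow_le_pow_iff_left₀ (by positivity) (by positivity) two_ne_zero).mp
      (le_of_mul_le_mul_left h (by positivity))

lemma norm_sum_smul_signVector_sq_le (t : (Fin n → Bool) → ℝ) :
    ‖∑ ε, t ε • signVector ε‖ ^ 2 ≤ 2 ^ n * ∑ ε, t ε ^ 2 := by
  set w := ∑ ε, t ε • signVector ε
  have h : (‖w‖ ^ 2) ^ 2 ≤ (2 ^ n * ∑ ε, t ε ^ 2) * ‖w‖ ^ 2 := by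
    calc (‖w‖ ^ 2) ^ 2 = (∑ ε, t ε * ⟪signVector ε, w⟫) ^ 2 := by
          rw [← real_inner_self_eq_norm_sq]
          simp only [w, sum_inner, real_inner_smul_left]
      _ ≤ (∑ ε, t ε ^ 2) * ∑ ε, ⟪signVector ε, w⟫ ^ 2 := sum_mul_sq_le_sq_mul_sq _ _ _
      _ = (2 ^ n * ∑ ε, t ε ^ 2) * ‖w‖ ^ 2 := by rw [sum_inner_signVector_sq]; ring
  rcases (sq_nonneg ‖w‖).eq_or_lt with hw | hw
  · rw [← hw]; positivity
  · exact le_of_mul_le_mul_right (by simpa only [sq] using h) hw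

end SignVector

section WeakNorms

variable {Z : Type*} [NormedAddCommGroup Z]

lemma lpNormFin_two_le_sqrt {m : ℕ} {x : ℕ → Z} (h : ∀ j < m, ‖x j‖ ≤ 1) :
    lpNormFin 2 m x ≤ √m := by
  rw [lpNormFin, if_neg ENNReal.ofNat_ne_top]
  simp only [ENNReal.toReal_ofNat, Real.rpow_two, ← Real.sqrt_eq_rpow]
  refine Real.sqrt_le_sqrt ?_
  calc ∑ j ∈ range m, ‖x j‖ ^ 2 ≤ ∑ _j ∈ range m, (1 : ℝ) :=
        sum_le_sum fun j hj => pow_le_one₀ (norm_nonneg _) (h j (mem_range.mp hj))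
    _ = m := by simp

variable [NormedSpace ℝ Z]

lemma weakNorm_nonneg (q : ℝ≥0∞) (m : ℕ) (x : ℕ → Z) : 0 ≤ weakNorm q m x := by
  unfold weakNorm
  split
  · exact Real.iSup_nonneg fun i => norm_nonneg _
  · exact Real.iSup_nonneg fun φ => Real.rpow_nonneg
      (sum_nonneg fun i _ => Real.rpow_nonneg (abs_nonneg _) _) _

lemma conjExp_two : conjExp 2 = 2 := by
  rw [conjExp, ENNReal.one_sub_inv_two, inv_inv]

lemma weakNorm_two_le {m : ℕ} {x : ℕ → Z} {K : ℝ} (hK : 0 ≤ K)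
    (h : ∀ Φ : Z →L[ℝ] ℝ, ‖Φ‖ ≤ 1 → ∑ j ∈ range m, Φ (x j) ^ 2 ≤ K ^ 2) :
    weakNorm 2 m x ≤ K := by
  have : Nonempty {Φ : Z →L[ℝ] ℝ // ‖Φ‖ ≤ 1} := ⟨⟨0, by simp⟩⟩
  rw [weakNorm, if_neg ENNReal.ofNat_ne_top]
  refine ciSup_le fun Φ => ?_
  simp only [ENNReal.toReal_ofNat, Real.rpow_two, sq_abs, ← Real.sqrt_eq_rpow]
  exact Real.sqrt_le_iff.mpr ⟨hK, h Φ.1 Φ.2⟩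

lemma sum_abs_le_opNorm_mul_weakNorm_one (g : Z →L[ℝ] ℝ) (m : ℕ) (x : ℕ → Z) :
    ∑ i ∈ range m, |g (x i)| ≤ ‖g‖ * weakNorm 1 m x := by
  rcases eq_or_ne g 0 with rfl | hg
  · simp
  have hbdd : BddAbove (Set.range fun φ : {φ : Z →L[ℝ] ℝ // ‖φ‖ ≤ 1} =>
      ∑ i ∈ range m, |φ.1 (x i)|) := by
    refine ⟨∑ i ∈ range m, ‖x i‖, ?_⟩
    rintro _ ⟨φ, rfl⟩
    exact sum_le_sum fun i _ => (φ.1.le_opNorm (x i)).trans (mul_le_of_le_one_left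
      (norm_nonneg _) φ.2)
  have hnorm : ‖‖g‖⁻¹ • g‖ ≤ 1 := by
    rw [norm_smul, norm_inv, norm_norm, inv_mul_cancel₀ (norm_ne_zero_iff.mpr hg)]
  rw [weakNorm, if_neg ENNReal.one_ne_top]
  simp only [ENNReal.toReal_one, Real.rpow_one, div_one]
  calc ∑ i ∈ range m, |g (x i)| = ‖g‖ * ∑ i ∈ range m, |(‖g‖⁻¹ • g) (x i)| := by
        simp [mul_sum, abs_mul, ← mul_assoc, mul_inv_cancel₀ (norm_ne_zero_iff.mpr hg)]
    _ ≤ _ := mul_le_mul_of_nonneg_left (le_ciSup hbdd ⟨_, hnorm⟩) (norm_nonneg g)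

end WeakNorms

section Listing

variable {ι : Type*} [Fintype ι]

/-- `weakNorm` and `lpNormFin` take sequences indexed by `ℕ`. -/
def listing {Z : Type*} [Zero Z] (f : ι → Z) (j : ℕ) : Z :=
  if h : j < Fintype.card ι then f ((Fintype.equivFin ι).symm ⟨j, h⟩) else 0

@[simp] lemma listing_equivFin {Z : Type*} [Zero Z] (f : ι → Z) (i : ι) :
    listing f (Fintype.equivFin ι i) = f i := by
  simp [listing]

lemma sum_range_card_eq_sum {M : Type*} [AddCommMonoid M] (F : ℕ → M) :
    ∑ j ∈ range (Fintype.card ι), F j = ∑ i, F (Fintype.equivFin ι i) := by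
  rw [← Fin.sum_univ_eq_sum_range]
  exact ((Fintype.equivFin ι).sum_comp fun j => F j).symm

end Listing

section SignFunctional

open RealInnerProductSpace

variable {Y : Type*} [NormedAddCommGroup Y] [NormedSpace ℝ Y] {n : ℕ}

def signFunctional (T : Y →L[ℝ] EuclideanSpace ℝ (Fin n)) (ε : Fin n → Bool) :
    Y →L[ℝ] ℝ :=
  (innerSL ℝ (signVector ε)).comp T

lemma signFunctional_apply (T : Y →L[ℝ] EuclideanSpace ℝ (Fin n)) (ε : Fin n → Bool) (y : Y) :
    signFunctional T ε y = ⟪signVector ε, T y⟫ :=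
  rfl

lemma sum_smul_signFunctional (T : Y →L[ℝ] EuclideanSpace ℝ (Fin n)) (t : (Fin n → Bool) → ℝ) :
    ∑ ε, t ε • signFunctional T ε = (innerSL ℝ (∑ ε, t ε • signVector ε)).comp T := by
  ext y
  simp [signFunctional_apply]

lemma sum_sq_apply_signFunctional_le (T : Y →L[ℝ] EuclideanSpace ℝ (Fin n))
    (Φ : (Y →L[ℝ] ℝ) →L[ℝ] ℝ) :
    ∑ ε, Φ (signFunctional T ε) ^ 2 ≤ (√(2 ^ n) * (‖Φ‖ * ‖T‖)) ^ 2 := by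
  set t := fun ε => Φ (signFunctional T ε)
  set S := ∑ ε, t ε ^ 2
  have h : S ≤ ‖Φ‖ * ‖T‖ * √(2 ^ n * S) := by
    calc S = Φ ((innerSL ℝ (∑ ε, t ε • signVector ε)).comp T) := by
          rw [← sum_smul_signFunctional, map_sum]
          simp only [S, t, map_smul, smul_eq_mul, sq]
      _ ≤ ‖Φ‖ * (‖∑ ε, t ε • signVector ε‖ * ‖T‖) := by
          refine (le_abs_self _).trans ((Φ.le_opNorm _).trans ?_)
          gcongr
          exact (ContinuousLinearMap.opNorm_comp_le _ _).trans_eq (by rw [innerSL_apply_norm])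
      _ ≤ ‖Φ‖ * (√(2 ^ n * S) * ‖T‖) := by
          gcongr
          exact Real.le_sqrt_of_sq_le (norm_sum_smul_signVector_sq_le t)
      _ = ‖Φ‖ * ‖T‖ * √(2 ^ n * S) := by ring
  have hS : 0 ≤ S := sum_nonneg fun ε _ => sq_nonneg _
  rw [Real.sqrt_mul (by positivity)] at h
  nlinarith [Real.sq_sqrt hS, Real.sqrt_nonneg S, Real.sq_sqrt (by positivity : (0:ℝ) ≤ 2 ^ n),
    Real.sqrt_nonneg (2 ^ n : ℝ), mul_nonneg (norm_nonneg Φ) (norm_nonneg T)]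

lemma weakNorm_two_listing_signFunctional_le (T : Y →L[ℝ] EuclideanSpace ℝ (Fin n)) :
    weakNorm 2 (Fintype.card (Fin n → Bool)) (listing (signFunctional T)) ≤ √(2 ^ n) * ‖T‖ := by
  refine weakNorm_two_le (by positivity) fun Φ hΦ => ?_
  rw [sum_range_card_eq_sum]
  simp only [listing_equivFin]
  refine (sum_sq_apply_signFunctional_le T Φ).trans ?_
  gcongr
  exact mul_le_of_le_one_left (norm_nonneg T) hΦ

end SignFunctional

section CohenStrong

variable {X Y : Type*} [NormedAddCommGroup X] [NormedSpace ℝ X]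
  [NormedAddCommGroup Y] [NormedSpace ℝ Y] {C : ℝ} {u : X →L[ℝ] Y}

lemma IsCohenStrongWith.sum_opNorm_comp_le (hu : IsCohenStrongWith 2 C u) (hC : 0 ≤ C)
    {ι : Type*} [Fintype ι] (φ : ι → Y →L[ℝ] ℝ) :
    ∑ i, ‖(φ i).comp u‖
      ≤ C * √(Fintype.card ι) * weakNorm 2 (Fintype.card ι) (listing φ) := by
  set N := Fintype.card ι
  -- Test the Cohen inequality against unit vectors nearly norming each `(φ i).comp u`.
  refine le_of_forall_pos_le_add fun δ hδ => ?_
  have hδ' : 0 < δ / (N + 1) := by positivity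
  choose z hz₁ hz₂ using fun i =>
    ((φ i).comp u).exists_lt_apply_of_lt_opNorm (sub_lt_self ‖(φ i).comp u‖ hδ')
  have hcohen := hu N (listing z) (listing φ)
  rw [conjExp_two, sum_range_card_eq_sum] at hcohen
  simp only [listing_equivFin] at hcohen
  have hz : lpNormFin 2 N (listing z) ≤ √N :=
    lpNormFin_two_le_sqrt fun j hj => by rw [listing, dif_pos hj]; exact (hz₁ _).le
  calc ∑ i, ‖(φ i).comp u‖ ≤ ∑ i, (|φ i (u (z i))| + δ / (N + 1)) :=
        sum_le_sum fun i _ => by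
          have := hz₂ i
          rw [ContinuousLinearMap.comp_apply, Real.norm_eq_abs] at this
          linarith
    _ = ∑ i, |φ i (u (z i))| + N * (δ / (N + 1)) := by simp [sum_add_distrib, N]
    _ ≤ C * √N * weakNorm 2 N (listing φ) + δ := by
        gcongr
        · exact hcohen.trans (by gcongr; exact weakNorm_nonneg _ _ _)
        · rw [mul_div_assoc', div_le_iff₀ (by positivity)]
          linarith

variable {n : ℕ}

lemma IsCohenStrongWith.sum_opNorm_comp_signFunctional_le (hu : IsCohenStrongWith 2 C u)
    (hC : 0 ≤ C) (T : Y →L[ℝ] EuclideanSpace ℝ (Fin n)) :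
    ∑ ε, ‖(signFunctional T ε).comp u‖ ≤ C * 2 ^ n * ‖T‖ := by
  have hcard : (Fintype.card (Fin n → Bool) : ℝ) = 2 ^ n := by simp
  calc ∑ ε, ‖(signFunctional T ε).comp u‖
      ≤ C * √(2 ^ n) * (√(2 ^ n) * ‖T‖) := by
        refine (hu.sum_opNorm_comp_le hC _).trans ?_
        rw [hcard]
        gcongr
        exact weakNorm_two_listing_signFunctional_le T
    _ = C * 2 ^ n * ‖T‖ := by
        rw [← mul_assoc, mul_assoc C, Real.mul_self_sqrt (by positivity)]

lemma IsCohenStrongWith.sum_norm_le_of_le_mul_norm (hu : IsCohenStrongWith 2 C u) (hC : 0 ≤ C)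
    (T : Y →L[ℝ] EuclideanSpace ℝ (Fin n)) {b : ℝ} (hb : 0 ≤ b) {m : ℕ} {x : ℕ → X}
    (h : ∀ i < m, ‖u (x i)‖ ≤ b * ‖T (u (x i))‖) :
    ∑ i ∈ range m, ‖u (x i)‖ ≤ √3 * C * b * ‖T‖ * weakNorm 1 m x := by
  have hw := weakNorm_nonneg 1 m x
  refine le_of_mul_le_mul_left ?_ (by positivity : (0 : ℝ) < 2 ^ n)
  calc 2 ^ n * ∑ i ∈ range m, ‖u (x i)‖ ≤ ∑ i ∈ range m, b * (2 ^ n * ‖T (u (x i))‖) := by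
        rw [mul_sum]
        exact sum_le_sum fun i hi => (mul_le_mul_of_nonneg_left (h i (mem_range.mp hi))
          (by positivity)).trans_eq (by ring)
    _ ≤ ∑ i ∈ range m, b * (√3 * ∑ ε, |(signFunctional T ε).comp u (x i)|) :=
        sum_le_sum fun i _ =>
          mul_le_mul_of_nonneg_left (pow_mul_norm_le_sum_abs_inner_signVector _) hb
    _ = √3 * b * ∑ ε, ∑ i ∈ range m, |(signFunctional T ε).comp u (x i)| := by
        simp only [mul_sum]
        rw [sum_comm]
        exact sum_congr rfl fun _ _ => sum_congr rfl fun _ _ => by ring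
    _ ≤ √3 * b * ∑ ε, ‖(signFunctional T ε).comp u‖ * weakNorm 1 m x :=
        mul_le_mul_of_nonneg_left
          (sum_le_sum fun ε _ => sum_abs_le_opNorm_mul_weakNorm_one _ _ _) (by positivity)
    _ ≤ √3 * b * (C * 2 ^ n * ‖T‖) * weakNorm 1 m x := by
        rw [← sum_mul, ← mul_assoc]
        exact mul_le_mul_of_nonneg_right (mul_le_mul_of_nonneg_left
          (hu.sum_opNorm_comp_signFunctional_le hC T) (by positivity)) hw
    _ = 2 ^ n * (√3 * C * b * ‖T‖ * weakNorm 1 m x) := by ring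

end CohenStrong

section Projection

variable {Y : Type*} [NormedAddCommGroup Y] [NormedSpace ℝ Y]

-- The orthogonal projection onto `v (G ⊓ S)`, transported back by `v`.
lemma exists_projection_of_equiv_euclidean {G : Submodule ℝ Y} {E : Type*}
    [NormedAddCommGroup E] [InnerProductSpace ℝ E] [FiniteDimensional ℝ E] (v : G ≃L[ℝ] E)
    (S : Submodule ℝ Y) :
    ∃ q : G →L[ℝ] S, ‖q‖ ≤ ‖(v : G →L[ℝ] E)‖ * ‖(v.symm : E →L[ℝ] G)‖ ∧
      ∀ y : G, (y : Y) ∈ S → (q y : Y) = y := by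
  set K := (S.comap G.subtype).map (v : G →ₗ[ℝ] E)
  have hK : ∀ e ∈ K, ((v.symm e : G) : Y) ∈ S := by
    rintro _ ⟨g, hg, rfl⟩
    simpa using hg
  let f : G →L[ℝ] Y :=
    G.subtypeL.comp ((v.symm : E →L[ℝ] G).comp (K.starProjection.comp (v : G →L[ℝ] E)))
  have hf : ‖f‖ ≤ ‖(v : G →L[ℝ] E)‖ * ‖(v.symm : E →L[ℝ] G)‖ := by
    refine (ContinuousLinearMap.opNorm_comp_le _ _).trans ?_
    refine (mul_le_of_le_one_left (norm_nonneg _) (Submodule.norm_subtypeL_le G)).trans ?_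
    refine (ContinuousLinearMap.opNorm_comp_le _ _).trans ?_
    rw [mul_comm]
    gcongr
    exact (ContinuousLinearMap.opNorm_comp_le _ _).trans
      (mul_le_of_le_one_left (norm_nonneg _) K.starProjection_norm_le)
  refine ⟨f.codRestrict S fun y => hK _ (K.starProjection_apply_mem _), ?_, fun y hy => ?_⟩
  · exact ContinuousLinearMap.opNorm_le_bound _ (by positivity) fun y =>
      (f.le_opNorm y).trans (by gcongr)
  · have hvy : v y ∈ K := ⟨y, hy, rfl⟩
    change ((v.symm (K.starProjection (v y)) : G) : Y) = y
    rw [K.starProjection_eq_self_iff.mpr hvy, v.symm_apply_apply]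

def localProjections (S : Submodule ℝ Y) (c : ℝ) (D : Submodule ℝ Y) : Set (Y → S) :=
  {f | (∀ y, ‖f y‖ ≤ c * ‖y‖) ∧ (∀ y ∈ D, ∀ z ∈ D, f (y + z) = f y + f z) ∧
    (∀ (a : ℝ), ∀ y ∈ D, f (a • y) = a • f y) ∧ ∀ y ∈ D, y ∈ S → (f y : Y) = y}

variable {S : Submodule ℝ Y} {c : ℝ}

lemma localProjections_anti {D D' : Submodule ℝ Y} (h : D ≤ D') :
    localProjections S c D' ⊆ localProjections S c D :=
  fun _ ⟨hb, hadd, hsmul, hfix⟩ => ⟨hb, fun y hy z hz => hadd y (h hy) z (h hz),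
    fun a y hy => hsmul a y (h hy), fun y hy => hfix y (h hy)⟩

lemma isClosed_localProjections (D : Submodule ℝ Y) : IsClosed (localProjections S c D) := by
  simp only [localProjections, Set.ofPred_and, Set.ofPred_forall]
  refine .inter (isClosed_iInter fun y => isClosed_le (continuous_apply y).norm continuous_const)
    (.inter ?_ (.inter ?_ ?_))
  · exact isClosed_iInter fun y => isClosed_iInter fun _ => isClosed_iInter fun z =>
      isClosed_iInter fun _ =>
        isClosed_eq (continuous_apply _) ((continuous_apply y).add (continuous_apply z))
  · exact isClosed_iInter fun a => isClosed_iInter fun y => isClosed_iInter fun _ =>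
      isClosed_eq (continuous_apply _) ((continuous_apply y).const_smul a)
  · exact isClosed_iInter fun y => isClosed_iInter fun _ => isClosed_iInter fun _ =>
      isClosed_eq (continuous_subtype_val.comp (continuous_apply y)) continuous_const

lemma isCompact_localProjections [FiniteDimensional ℝ S] (D : Submodule ℝ Y) :
    IsCompact (localProjections S c D) :=
  (isCompact_univ_pi fun y => isCompact_closedBall (0 : S) (c * ‖y‖)).of_isClosed_subset
    (isClosed_localProjections D) fun f hf y _ => by
      simpa only [Metric.mem_closedBall, dist_zero_right] using hf.1 y

lemma localProjections_nonempty {D G : Submodule ℝ Y} (hDG : D ≤ G) {q : G →L[ℝ] S}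
    (hq : ‖q‖ ≤ c) (hqS : ∀ y : G, (y : Y) ∈ S → (q y : Y) = y) :
    (localProjections S c D).Nonempty := by
  classical
  refine ⟨fun y => if hy : y ∈ G then q ⟨y, hy⟩ else 0, fun y => ?_, fun y hy z hz => ?_,
    fun a y hy => ?_, fun y hy hyS => ?_⟩
  · dsimp only
    split_ifs with hy
    · exact (q.le_opNorm _).trans (mul_le_mul_of_nonneg_right hq (norm_nonneg y))
    · simpa using mul_nonneg ((norm_nonneg q).trans hq) (norm_nonneg y)
  · simp only [dif_pos (hDG hy), dif_pos (hDG hz), dif_pos (G.add_mem (hDG hy) (hDG hz))]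
    exact map_add q ⟨y, hDG hy⟩ ⟨z, hDG hz⟩
  · simp only [dif_pos (hDG hy), dif_pos (G.smul_mem a (hDG hy))]
    exact map_smul q a ⟨y, hDG hy⟩
  · simp only [dif_pos (hDG hy)]
    exact hqS ⟨y, hDG hy⟩ hyS

/-- The sets `localProjections S c D`, `D` finite-dimensional, are compact in the product topology
and directed, so they have a common element; it is linear on all of `Y`. -/
lemma exists_projection_of_forall_finiteDimensional [FiniteDimensional ℝ S]
    (h : ∀ D : Submodule ℝ Y, FiniteDimensional ℝ D → ∃ G : Submodule ℝ Y, D ≤ G ∧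
      ∃ q : G →L[ℝ] S, ‖q‖ ≤ c ∧ ∀ y : G, (y : Y) ∈ S → (q y : Y) = y) :
    ∃ P : Y →L[ℝ] S, (∀ y, ‖P y‖ ≤ c * ‖y‖) ∧ ∀ y : S, P y = y := by
  let t : {D : Submodule ℝ Y // FiniteDimensional ℝ D} → Set (Y → S) :=
    fun D => localProjections S c D.1
  have : Nonempty {D : Submodule ℝ Y // FiniteDimensional ℝ D} := ⟨⟨⊥, inferInstance⟩⟩
  obtain ⟨f, hf⟩ := IsCompact.nonempty_iInter_of_directed_nonempty_isCompact_isClosed t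
    (fun D D' => ⟨⟨D.1 ⊔ D'.1, have := D.2; have := D'.2; inferInstance⟩,
      localProjections_anti le_sup_left, localProjections_anti le_sup_right⟩)
    (fun D => by
      obtain ⟨G, hDG, q, hq, hqS⟩ := h D.1 D.2
      exact localProjections_nonempty hDG hq hqS)
    (fun D => isCompact_localProjections D.1) (fun D => isClosed_localProjections D.1)
  rw [Set.mem_iInter] at hf
  have hspan : ∀ y z : Y, f ∈ localProjections S c (Submodule.span ℝ {y, z}) := fun y z =>
    hf ⟨_, FiniteDimensional.span_of_finite ℝ (Set.toFinite _)⟩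
  have hy : ∀ y z : Y, y ∈ Submodule.span ℝ {y, z} := fun y z => Submodule.subset_span (by simp)
  have hz : ∀ y z : Y, z ∈ Submodule.span ℝ {y, z} := fun y z => Submodule.subset_span (by simp)
  let P : Y →ₗ[ℝ] S :=
    { toFun := f
      map_add' := fun y z => (hspan y z).2.1 y (hy y z) z (hz y z)
      map_smul' := fun a y => (hspan y y).2.2.1 a y (hy y y) }
  exact ⟨P.mkContinuous c (hspan 0 0).1, (hspan 0 0).1,
    fun y => Subtype.ext ((hspan y y).2.2.2 y (hy y y) y.2)⟩

lemma IsLpSpaceWith.exists_projection {lam : ℝ} (hY : IsLpSpaceWith 2 lam Y)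
    (S : Submodule ℝ Y) [FiniteDimensional ℝ S] :
    ∃ P : Y →L[ℝ] S, (∀ y, ‖P y‖ ≤ lam * ‖y‖) ∧ ∀ y : S, P y = y :=
  exists_projection_of_forall_finiteDimensional fun D hD => by
    obtain ⟨G, hDG, -, v, hv⟩ := hY D hD
    obtain ⟨q, hq, hqS⟩ := exists_projection_of_equiv_euclidean v S
    exact ⟨G, hDG, q, hq.trans hv, hqS⟩

end Projection

lemma IsCohenStrongWith.sum_norm_le_of_isLpSpaceWith {X Y : Type*} [NormedAddCommGroup X]
    [NormedSpace ℝ X] [NormedAddCommGroup Y] [NormedSpace ℝ Y] {lam C : ℝ} {u : X →L[ℝ] Y}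
    (hY : IsLpSpaceWith 2 lam Y) (hu : IsCohenStrongWith 2 C u) (hC : 0 ≤ C) (m : ℕ)
    (x : ℕ → X) :
    ∑ i ∈ range m, ‖u (x i)‖ ≤ √3 * C * lam ^ 2 * weakNorm 1 m x := by
  obtain ⟨S, hES, hS, v, hv⟩ :=
    hY _ (FiniteDimensional.span_of_finite ℝ (Set.finite_range fun i : Fin m => u (x i)))
  obtain ⟨P, hP, hPS⟩ := hY.exists_projection S
  set a := ‖v.toContinuousLinearMap‖
  set b := ‖v.symm.toContinuousLinearMap‖
  have hlam : 0 ≤ lam := (by positivity : 0 ≤ a * b).trans hv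
  set T := v.toContinuousLinearMap.comp P
  have hT : ‖T‖ ≤ a * lam := (ContinuousLinearMap.opNorm_comp_le _ _).trans
    (by gcongr; exact P.opNorm_le_bound hlam hP)
  have hx : ∀ i < m, ‖u (x i)‖ ≤ b * ‖T (u (x i))‖ := fun i hi => by
    have hmem : u (x i) ∈ S := hES (Submodule.subset_span ⟨⟨i, hi⟩, rfl⟩)
    have hvT : v.symm (T (u (x i))) = ⟨u (x i), hmem⟩ := by
      simp [T, hPS ⟨_, hmem⟩]
    calc ‖u (x i)‖ = ‖v.symm (T (u (x i)))‖ := by rw [hvT]; rfl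
      _ ≤ b * ‖T (u (x i))‖ := v.symm.toContinuousLinearMap.le_opNorm _
  have hw := weakNorm_nonneg 1 m x
  calc ∑ i ∈ range m, ‖u (x i)‖ ≤ √3 * C * b * ‖T‖ * weakNorm 1 m x :=
        hu.sum_norm_le_of_le_mul_norm hC T (norm_nonneg v.symm.toContinuousLinearMap) hx
    _ ≤ √3 * C * b * (a * lam) * weakNorm 1 m x := by gcongr
    _ = √3 * C * (a * b) * lam * weakNorm 1 m x := by ring
    _ ≤ √3 * C * lam * lam * weakNorm 1 m x := by gcongr
    _ = √3 * C * lam ^ 2 * weakNorm 1 m x := by ring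

theorem stmt6_general {X : Type u} {Y : Type v} [NormedAddCommGroup X] [NormedSpace ℝ X]
    [NormedAddCommGroup Y] [NormedSpace ℝ Y]
    (hY : IsLpSpace 2 Y) (u : X →L[ℝ] Y)
    (hu : IsCohenStrong 2 u) :
    IsPSumming 1 u := by
  obtain ⟨lam, -, hY⟩ := hY
  obtain ⟨C, hC, hu⟩ := hu
  rw [IsPSumming, if_neg ENNReal.one_ne_top]
  rintro x ⟨B, hB⟩
  simp only [ENNReal.toReal_one, Real.rpow_one]
  exact summable_of_sum_range_le (c := √3 * C * lam ^ 2 * B) (fun i => norm_nonneg _) fun m =>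
    (hu.sum_norm_le_of_isLpSpaceWith hY hC m x).trans (by gcongr; exact hB m)

/-- If `X` has type 2 and `Y` is an `L_2`-space, then
`D_2(X,Y) ⊆ Π_1(X,Y)`. -/
theorem stmt6 {X : Type u} {Y : Type v} [NormedAddCommGroup X] [NormedSpace ℝ X]
    [CompleteSpace X] [NormedAddCommGroup Y] [NormedSpace ℝ Y] [CompleteSpace Y]
    (hX : HasTypeP 2 X) (hY : IsLpSpace 2 Y) (u : X →L[ℝ] Y)
    (hu : IsCohenStrong 2 u) :
    IsPSumming 1 u :=
  stmt6_general hY u hu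

end
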